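/- Let G be a graph obtained from a graph G' by adding, for each vertex u of G', a set Z_u of k+1 new pendant vertices adjacent only to u. If there exists a partition P of V(G) into connected parts with cost(P) ≤ k such that G/P is 2K_2-free, then the induced partition P' = {S \ Z : S ∈ P} \ {∅} of V(G') makes G'/P' have no induced 2K_1 (i.e., G'/P' is complete). -/

import Mathlib

variable {V W : Type*}

/-- Contraction of a graph by a partition (setoid): two classes are adjacent
iff they are distinct and joined by an edge of `G`. -/
def contractQ (G : SimpleGraph V) (s : Setoid V) : SimpleGraph (Quotient s) where
  Adj x y := x ≠ y ∧ ∃ a b : V, Quotient.mk s a = x ∧ Quotient.mk s b = y ∧ G.Adj a b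
  symm := by
    constructor
    rintro x y ⟨hne, a, b, ha, hb, hab⟩
    exact ⟨hne.symm, b, a, hb, ha, hab.symm⟩
  loopless := by
    constructor
    rintro x ⟨hne, -⟩
    exact hne rfl

/-- The partition of the vertices induced by contracting a set `F` of edges of `G`. -/
def edgeSetoid (G : SimpleGraph V) (F : Set (Sym2 V)) : Setoid V :=
  Relation.EqvGen.setoid (fun a b => G.Adj a b ∧ s(a, b) ∈ F)

/-- The graph `G/F` obtained from `G` by contracting the edges in `F`. -/
def contractE (G : SimpleGraph V) (F : Set (Sym2 V)) :
    SimpleGraph (Quotient (edgeSetoid G F)) := contractQ G (edgeSetoid G F)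

/-- `G` contains an induced copy of `H`. -/
def HasInducedCopy (H : SimpleGraph W) (G : SimpleGraph V) : Prop :=
  ∃ f : W ↪ V, ∀ a b : W, H.Adj a b ↔ G.Adj (f a) (f b)

/-- `G` can be turned into an `H`-free graph by contracting at most `k` of its edges. -/
def ContractsToFree (G : SimpleGraph V) (k : ℕ) (H : SimpleGraph W) : Prop :=
  ∃ F : Finset (Sym2 V), ↑F ⊆ G.edgeSet ∧ F.card ≤ k ∧
    ¬ HasInducedCopy H (contractE G (↑F : Set (Sym2 V)))

/-- The cost of the partition given by a setoid: the sum over classes of (size - 1). -/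
noncomputable def setoidCost (s : Setoid V) : ℕ :=
  ∑ᶠ c : Quotient s, ({v : V | Quotient.mk s v = c}.ncard - 1)

/-- Vertex set after adding `k+1` pendant vertices `Z_u` to each vertex `u` of `G'`. -/
abbrev PendV (V : Type*) (k : ℕ) := V ⊕ (V × Fin (k + 1))

/-- The graph obtained from `G'` by attaching, to each vertex `u`, a set `Z_u` of `k+1`
new pendant vertices adjacent only to `u`. -/
def pendant {V : Type*} (G' : SimpleGraph V) (k : ℕ) : SimpleGraph (PendV V k) :=
  SimpleGraph.fromRel (fun x y =>
    match x, y with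
    | Sum.inl a, Sum.inl b => G'.Adj a b
    | Sum.inl a, Sum.inr (b, _) => a = b
    | _, _ => False)

/-!
Since the parts are connected, a pendant vertex that is not alone in its part shares the part with
its only neighbour. If this happened for all of `Z_u`, the part of `u` would have at least `k + 2`
vertices and cost more than `k`; so every `u` has a pendant vertex `z_u` forming a part by itself.
For distinct parts `[a] ≠ [b]` of the induced partition, `z_a[a]` and `z_b[b]` are disjoint edges
of `G/P`, and the only edge that can join them is `[a][b]`, by `2K_2`-freeness. An edge of `G`
between these parts projects to an edge of `G'`: an endpoint in `Z_u` drags `u` into its part.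
-/

open SimpleGraph

lemma adj_of_not_exists_induced_2K2 {Q : Type*} {H : SimpleGraph Q} {z₁ w₁ z₂ w₂ : Q}
    (hfree : ¬ ∃ a b c d : Q, H.Adj a b ∧ H.Adj c d ∧
      a ≠ c ∧ a ≠ d ∧ b ≠ c ∧ b ≠ d ∧ ¬ H.Adj a c ∧ ¬ H.Adj a d ∧ ¬ H.Adj b c ∧ ¬ H.Adj b d)
    (h₁ : H.Adj z₁ w₁) (h₂ : H.Adj z₂ w₂)
    (hN₁ : ∀ y, H.Adj z₁ y → y = w₁) (hN₂ : ∀ y, H.Adj z₂ y → y = w₂)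
    (hw : w₁ ≠ w₂) (hzw : z₁ ≠ w₂) : H.Adj w₁ w₂ := by
  have hz₂w₁ : z₂ ≠ w₁ := by
    rintro rfl
    exact hzw (hN₂ _ h₁.symm)
  by_contra h
  refine hfree ⟨z₁, w₁, z₂, w₂, h₁, h₂, ?_, hzw, hz₂w₁.symm, hw,
    fun h' => hz₂w₁ (hN₁ _ h'), fun h' => hw (hN₁ _ h').symm,
    fun h' => hw (hN₂ _ h'.symm), h⟩
  rintro rfl
  exact hw (hN₁ _ h₂).symm

section Partition

variable {α : Type*}

lemma ncard_le_setoidCost_add_one [Finite α] (s : Setoid α) (c : Quotient s) :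
    {v | Quotient.mk s v = c}.ncard ≤ setoidCost s + 1 := by
  have : {v | Quotient.mk s v = c}.ncard - 1 ≤ setoidCost s :=
    single_le_finsum (f := fun c => ({v | Quotient.mk s v = c}.ncard - 1)) c
      (Set.toFinite _) fun _ => Nat.zero_le _
  omega

variable {G : SimpleGraph α} {s : Setoid α} {v w x : α}

lemma rel_of_forall_adj_eq (hconn : (G.induce {u | s.r u v}).Connected)
    (hw : ∀ y, G.Adj v y → y = w) (hx : s.r x v) (hxv : x ≠ v) : s.r w v := by
  obtain ⟨p⟩ := hconn ⟨v, s.refl v⟩ ⟨x, hx⟩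
  have hne : (⟨v, s.refl v⟩ : {u | s.r u v}) ≠ ⟨x, hx⟩ :=
    fun h => hxv (congrArg Subtype.val h).symm
  have := p.adj_snd (p.not_nil_of_ne hne)
  rw [← hw _ this]
  exact p.snd.2

lemma contractQ_adj_mk_of_adj {a b : α} (h : G.Adj a b) (hab : ¬ s.r a b) :
    (contractQ G s).Adj (Quotient.mk s a) (Quotient.mk s b) :=
  ⟨fun h' => hab (Quotient.exact h'), a, b, rfl, rfl, h⟩

lemma eq_mk_of_contractQ_adj_mk {c : Quotient s} (hv : ∀ y, s.r y v → y = v)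
    (hw : ∀ y, G.Adj v y → y = w) (h : (contractQ G s).Adj (Quotient.mk s v) c) :
    c = Quotient.mk s w := by
  obtain ⟨-, p, q, hp, rfl, hpq⟩ := h
  rw [hv p (Quotient.exact hp)] at hpq
  rw [hw q hpq]

end Partition

section Pendant

variable {G' : SimpleGraph V} {k : ℕ}

def pendantBase (k : ℕ) : PendV V k → V := Sum.elim id Prod.fst

lemma pendant_adj_inr_iff {u : V} {j : Fin (k + 1)} {w : PendV V k} :
    (pendant G' k).Adj (Sum.inr (u, j)) w ↔ w = Sum.inl u := by
  rcases w with b | ⟨b, j'⟩ <;> simp [pendant, eq_comm]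

lemma pendant_adj_base {p q : PendV V k} (h : (pendant G' k).Adj p q) :
    pendantBase k p = pendantBase k q ∨ G'.Adj (pendantBase k p) (pendantBase k q) := by
  rcases p with a | ⟨a, j⟩ <;> rcases q with b | ⟨b, j'⟩ <;> 
    simp_all [pendant, pendantBase, adj_comm]

variable {s : Setoid (PendV V k)}
  (hconn : ∀ v : PendV V k, ((pendant G' k).induce {u | s.r u v}).Connected)
include hconn

lemma rel_inl_pendantBase {p : PendV V k} {a : V} (h : s.r p (Sum.inl a)) :
    s.r (Sum.inl (pendantBase k p)) (Sum.inl a) := by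
  rcases p with b | ⟨u, j⟩
  · exact h
  · exact s.trans (rel_of_forall_adj_eq (hconn _) (fun _ => pendant_adj_inr_iff.1) (s.symm h)
      Sum.inl_ne_inr) h

omit hconn in
lemma contractQ_adj_of_isolated_pendant {u : V} {j : Fin (k + 1)}
    (hz : ∀ y, s.r y (Sum.inr (u, j)) → y = Sum.inr (u, j)) :
    (contractQ (pendant G' k) s).Adj (Quotient.mk s (Sum.inr (u, j)))
      (Quotient.mk s (Sum.inl u)) :=
  contractQ_adj_mk_of_adj (pendant_adj_inr_iff.2 rfl) fun h => Sum.inl_ne_inr (hz _ (s.symm h))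

omit hconn in
lemma eq_of_contractQ_adj_isolated_pendant {u : V} {j : Fin (k + 1)}
    (hz : ∀ y, s.r y (Sum.inr (u, j)) → y = Sum.inr (u, j)) :
    ∀ c, (contractQ (pendant G' k) s).Adj (Quotient.mk s (Sum.inr (u, j))) c →
      c = Quotient.mk s (Sum.inl u) :=
  fun _ => eq_mk_of_contractQ_adj_mk hz fun _ => pendant_adj_inr_iff.1

lemma exists_isolated_pendant [Finite V] (hcost : setoidCost s ≤ k) (u : V) :
    ∃ j : Fin (k + 1), ∀ y, s.r y (Sum.inr (u, j)) → y = Sum.inr (u, j) := by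
  by_contra! h
  have hrel (j : Fin (k + 1)) : s.r (Sum.inl u) (Sum.inr (u, j)) :=
    let ⟨_, hy, hne⟩ := h j
    rel_of_forall_adj_eq (hconn _) (fun _ => pendant_adj_inr_iff.1) hy hne
  let f : Option (Fin (k + 1)) → PendV V k := fun o => o.elim (Sum.inl u) fun j => Sum.inr (u, j)
  have hf : Function.Injective f := by
    rintro (_ | i) (_ | j) hij <;> simp_all [f]
  have hsub : Set.range f ⊆ {v | Quotient.mk s v = Quotient.mk s (Sum.inl u)} := by
    rintro _ ⟨_ | j, rfl⟩
    · rfl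
    · exact Quotient.sound (s.symm (hrel j))
  have := (Set.ncard_le_ncard hsub).trans (ncard_le_setoidCost_add_one s _)
  rw [Set.ncard_range_of_injective hf, Nat.card_eq_fintype_card, Fintype.card_option,
    Fintype.card_fin] at this
  omega

lemma contractQ_adj_comap_inl {a b : V}
    (h : (contractQ (pendant G' k) s).Adj (Quotient.mk s (Sum.inl a))
      (Quotient.mk s (Sum.inl b))) :
    (contractQ G' (s.comap Sum.inl)).Adj (Quotient.mk _ a) (Quotient.mk _ b) := by
  obtain ⟨hne, p, q, hp, hq, hpq⟩ := h
  have hp' := rel_inl_pendantBase hconn (Quotient.exact hp)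
  have hq' := rel_inl_pendantBase hconn (Quotient.exact hq)
  have hab : ¬ s.r (Sum.inl a) (Sum.inl b) := fun h => hne (Quotient.sound h)
  rcases pendant_adj_base hpq with heq | hadj
  · exact absurd (s.trans (s.symm hp') (heq ▸ hq')) hab
  · exact ⟨fun h => hab (Quotient.exact (s := s.comap Sum.inl) h), _, _,
      Quotient.sound hp', Quotient.sound hq', hadj⟩

end Pendant

/-- If the pendant-augmented graph `G` admits a partition `P` into connected
parts of cost at most `k` whose quotient is `2K_2`-free, then the partition induced on
`V(G')` makes the quotient of `G'` have no induced `2K_1`, i.e. be complete. -/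
theorem pendant_2k2_free_implies_complete {V : Type*} [Fintype V]
    (G' : SimpleGraph V) (k : ℕ) (s : Setoid (PendV V k))
    (hconn : ∀ v : PendV V k, ((pendant G' k).induce {u | s.r u v}).Connected)
    (hcost : setoidCost s ≤ k)
    (hfree : ¬ ∃ a b c d : Quotient s,
      (contractQ (pendant G' k) s).Adj a b ∧ (contractQ (pendant G' k) s).Adj c d ∧
      a ≠ c ∧ a ≠ d ∧ b ≠ c ∧ b ≠ d ∧
      ¬ (contractQ (pendant G' k) s).Adj a c ∧ ¬ (contractQ (pendant G' k) s).Adj a d ∧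
      ¬ (contractQ (pendant G' k) s).Adj b c ∧ ¬ (contractQ (pendant G' k) s).Adj b d) :
    ∀ x y : Quotient (Setoid.comap Sum.inl s), x ≠ y →
      (contractQ G' (Setoid.comap Sum.inl s)).Adj x y := by
  intro x y hxy
  induction x, y using Quotient.inductionOn₂ with | h a b => ?_
  have hab : (Quotient.mk s (Sum.inl a) : Quotient s) ≠ Quotient.mk s (Sum.inl b) :=
    fun h => hxy (Quotient.sound (s := Setoid.comap Sum.inl s) (Quotient.exact (s := s) h))
  obtain ⟨ja, hza⟩ := exists_isolated_pendant hconn hcost a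
  obtain ⟨jb, hzb⟩ := exists_isolated_pendant hconn hcost b
  refine contractQ_adj_comap_inl hconn <| adj_of_not_exists_induced_2K2 hfree
    (contractQ_adj_of_isolated_pendant hza) (contractQ_adj_of_isolated_pendant hzb)
    (eq_of_contractQ_adj_isolated_pendant hza) (eq_of_contractQ_adj_isolated_pendant hzb) hab ?_
  intro h
  simpa using hza _ (Quotient.exact h.symm)
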